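/- A normal-form McNaughton function φ(x) = min_{i∈I} max_{j∈Jᵢ} ρ(aᵢⱼ·x + bᵢⱼ) on [0,1]ⁿ is locally homogeneous in zero if and only if there exists an index i ∈ I such that bᵢⱼ ≤ 0 for every j ∈ Jᵢ. -/

import Mathlib

/-- The truncation function `ρ(y) = max(0, min(1, y))`. -/
noncomputable def rho (y : ℝ) : ℝ := max 0 (min 1 y)

/-- The unit hypercube `[0,1]ⁿ` inside `ℝⁿ`. -/
def unitCube (n : ℕ) : Set (Fin n → ℝ) := {x | ∀ t, x t ∈ Set.Icc (0 : ℝ) 1}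

/-- The normal-form McNaughton function
`φ(x) = min_i max_j ρ(aᵢⱼ·x + bᵢⱼ)` with integer data `a`, `b`. -/
noncomputable def mcN (n k : ℕ) (m : Fin (k + 1) → ℕ)
    (a : (i : Fin (k + 1)) → Fin (m i + 1) → Fin n → ℤ)
    (b : (i : Fin (k + 1)) → Fin (m i + 1) → ℤ) (x : Fin n → ℝ) : ℝ :=
  Finset.univ.inf' Finset.univ_nonempty fun i =>
    Finset.univ.sup' Finset.univ_nonempty fun j =>
      rho ((∑ t, (a i j t : ℝ) * x t) + (b i j : ℝ))

/-- The zeroset of a normal-form McNaughton function on `[0,1]ⁿ`. -/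
def zset (n k : ℕ) (m : Fin (k + 1) → ℕ)
    (a : (i : Fin (k + 1)) → Fin (m i + 1) → Fin n → ℤ)
    (b : (i : Fin (k + 1)) → Fin (m i + 1) → ℤ) : Set (Fin n → ℝ) :=
  {x ∈ unitCube n | mcN n k m a b x = 0}

/-- `φ` is locally homogeneous in zero: there is a neighborhood `U` of `0`
in `[0,1]ⁿ` such that `φ(N·x) = N·φ(x)` whenever `x ∈ U` and `N·x ∈ U`. -/
def LocHomZero (n : ℕ) (φ : (Fin n → ℝ) → ℝ) : Prop :=
  ∃ U : Set (Fin n → ℝ), U ⊆ unitCube n ∧ U ∈ nhdsWithin 0 (unitCube n) ∧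
    ∀ (N : ℕ) (x : Fin n → ℝ), x ∈ U → (fun t => (N : ℝ) * x t) ∈ U →
      φ (fun t => (N : ℝ) * x t) = (N : ℝ) * φ x

/-! At `0` every term `ρ(bᵢⱼ)` is `0` or `1`, so `φ(0) = 0`, which homogeneity with `N = 0`
forces, needs a disjunction with all `bᵢⱼ ≤ 0`. Conversely, where all `|aᵢⱼ·x| < 1/2`, a
disjunction with some `bᵢⱼ ≥ 1` is `≥ 1/2` while one with all `bᵢⱼ ≤ 0` is `≤ 1/2`, so only the
latter matter; in those each term is `0` (if `bᵢⱼ ≤ -1`) or `max(0, aᵢⱼ·x)` (if `bᵢⱼ = 0`),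
which is positively homogeneous. -/

theorem rho_of_nonpos {y : ℝ} (hy : y ≤ 0) : rho y = 0 := by
  unfold rho
  rw [min_eq_right (hy.trans zero_le_one), max_eq_left hy]

theorem rho_add_intCast_le_half {y : ℝ} {b : ℤ} (hb : b ≤ 0) (hy : y ≤ 1 / 2) :
    rho (y + b) ≤ 1 / 2 := by
  have : (b : ℝ) ≤ 0 := mod_cast hb
  unfold rho
  exact max_le (by norm_num) ((min_le_right _ _).trans (by linarith))

theorem half_le_rho_add_intCast {y : ℝ} {b : ℤ} (hb : 0 < b) (hy : -(1 / 2) ≤ y) :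
    1 / 2 ≤ rho (y + b) := by
  have : (1 : ℝ) ≤ b := mod_cast hb
  unfold rho
  exact le_max_of_le_right (le_min (by norm_num) (by linarith))

theorem rho_mul_add_intCast {c y : ℝ} {b : ℤ} (hc : 0 ≤ c) (hb : b ≤ 0) (hy : y ≤ 1)
    (hcy : c * y ≤ 1) : rho (c * y + b) = c * rho (y + b) := by
  rcases hb.lt_or_eq with hb | rfl
  · have : (b : ℝ) ≤ -1 := mod_cast Int.le_sub_one_of_lt hb
    rw [rho_of_nonpos (by linarith), rho_of_nonpos (by linarith), mul_zero]
  · simp only [Int.cast_zero, add_zero, rho, min_eq_right hy, min_eq_right hcy,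
      mul_max_of_nonneg _ _ hc, mul_zero]

theorem Finset.univ_inf'_eq_inf'_of_le {ι α : Type*} [Fintype ι] [Nonempty ι]
    [SemilatticeInf α] {f : ι → α} {s : Finset ι} (hs : s.Nonempty) {c : α}
    (hle : ∀ i ∈ s, f i ≤ c) (hge : ∀ i ∉ s, c ≤ f i) :
    univ.inf' univ_nonempty f = s.inf' hs f := by
  refine le_antisymm (inf'_mono f (subset_univ s) hs) (le_inf' _ _ fun i _ => ?_)
  by_cases hi : i ∈ s
  · exact inf'_le f hi
  · obtain ⟨i₀, hi₀⟩ := hs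
    exact (inf'_le f hi₀).trans ((hle i₀ hi₀).trans (hge i hi))

section MaxTerm

variable {n : ℕ} {J : Type*} [Fintype J] [Nonempty J]

noncomputable def maxTerm (a : J → Fin n → ℤ) (b : J → ℤ) (x : Fin n → ℝ) : ℝ :=
  Finset.univ.sup' Finset.univ_nonempty fun j => rho ((fun t => (a j t : ℝ)) ⬝ᵥ x + b j)

theorem maxTerm_le_half {a : J → Fin n → ℤ} {b : J → ℤ} {x : Fin n → ℝ}
    (hb : ∀ j, b j ≤ 0) (hx : ∀ j, (fun t => (a j t : ℝ)) ⬝ᵥ x ≤ 1 / 2) :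
    maxTerm a b x ≤ 1 / 2 :=
  Finset.sup'_le _ _ fun j _ => rho_add_intCast_le_half (hb j) (hx j)

theorem half_le_maxTerm {a : J → Fin n → ℤ} {b : J → ℤ} {x : Fin n → ℝ} {j : J}
    (hb : 0 < b j) (hx : -(1 / 2) ≤ (fun t => (a j t : ℝ)) ⬝ᵥ x) :
    1 / 2 ≤ maxTerm a b x := by
  unfold maxTerm
  exact Finset.le_sup'_of_le _ (Finset.mem_univ j) (half_le_rho_add_intCast hb hx)

theorem maxTerm_smul {a : J → Fin n → ℤ} {b : J → ℤ} {x : Fin n → ℝ} {c : ℝ} (hc : 0 ≤ c)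
    (hb : ∀ j, b j ≤ 0) (hx : ∀ j, (fun t => (a j t : ℝ)) ⬝ᵥ x ≤ 1)
    (hcx : ∀ j, (fun t => (a j t : ℝ)) ⬝ᵥ (c • x) ≤ 1) :
    maxTerm a b (c • x) = c * maxTerm a b x := by
  simp only [maxTerm, dotProduct_smul, smul_eq_mul] at hcx ⊢
  rw [Finset.mul₀_sup' hc]
  exact Finset.sup'_congr _ rfl fun j _ => rho_mul_add_intCast hc (hb j) (hx j) (hcx j)

end MaxTerm

section McNaughton

variable {n k : ℕ} {m : Fin (k + 1) → ℕ} {a : (i : Fin (k + 1)) → Fin (m i + 1) → Fin n → ℤ}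
  {b : (i : Fin (k + 1)) → Fin (m i + 1) → ℤ}

theorem exists_forall_nonpos_of_mcN_zero (h : mcN n k m a b 0 = 0) : ∃ i, ∀ j, b i j ≤ 0 := by
  by_contra! hpos
  have : (1 / 2 : ℝ) ≤ mcN n k m a b 0 := Finset.le_inf' _ _ fun i _ =>
    half_le_maxTerm (hpos i).choose_spec (by simp)
  linarith

def nonposRows (b : (i : Fin (k + 1)) → Fin (m i + 1) → ℤ) : Finset (Fin (k + 1)) :=
  Finset.univ.filter fun i => ∀ j, b i j ≤ 0

theorem mcN_eq_inf'_nonposRows (hS : (nonposRows b).Nonempty) {x : Fin n → ℝ}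
    (hx : ∀ i j, |(fun t => (a i j t : ℝ)) ⬝ᵥ x| < 1 / 2) :
    mcN n k m a b x = (nonposRows b).inf' hS fun i => maxTerm (a i) (b i) x := by
  refine Finset.univ_inf'_eq_inf'_of_le hS (c := 1 / 2) (fun i hi => ?_) (fun i hi => ?_)
  · rw [nonposRows, Finset.mem_filter] at hi
    exact maxTerm_le_half hi.2 fun j => (abs_lt.1 (hx i j)).2.le
  · simp only [nonposRows, Finset.mem_filter, Finset.mem_univ, true_and, not_forall,
      not_le] at hi
    obtain ⟨j, hj⟩ := hi
    exact half_le_maxTerm hj (abs_lt.1 (hx i j)).1.le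

theorem mcN_smul (hS : (nonposRows b).Nonempty) {x : Fin n → ℝ} {c : ℝ} (hc : 0 ≤ c)
    (hx : ∀ i j, |(fun t => (a i j t : ℝ)) ⬝ᵥ x| < 1 / 2)
    (hcx : ∀ i j, |(fun t => (a i j t : ℝ)) ⬝ᵥ (c • x)| < 1 / 2) :
    mcN n k m a b (c • x) = c * mcN n k m a b x := by
  rw [mcN_eq_inf'_nonposRows hS hx, mcN_eq_inf'_nonposRows hS hcx,
    Finset.apply_inf'_eq_inf'_comp hS _ fun y z => mul_min_of_nonneg y z hc]
  refine Finset.inf'_congr hS rfl fun i hi => ?_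
  rw [nonposRows, Finset.mem_filter] at hi
  exact maxTerm_smul hc hi.2 (fun j => by linarith [(abs_lt.1 (hx i j)).2])
    fun j => by linarith [(abs_lt.1 (hcx i j)).2]

theorem locHomZero_mcN (hS : (nonposRows b).Nonempty) : LocHomZero n (mcN n k m a b) := by
  set V := {x : Fin n → ℝ | ∀ i j, |(fun t => (a i j t : ℝ)) ⬝ᵥ x| < 1 / 2}
  have hV : IsOpen V := by
    simp only [V, Set.ofPred_forall]
    exact isOpen_iInter_of_finite fun i => isOpen_iInter_of_finite fun j =>
      isOpen_lt (by fun_prop) continuous_const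
  refine ⟨unitCube n ∩ V, Set.inter_subset_left,
    inter_mem_nhdsWithin _ (hV.mem_nhds (by simp [V])), ?_⟩
  rintro N x ⟨-, hx⟩ ⟨-, hNx⟩
  exact mcN_smul hS N.cast_nonneg hx hNx

end McNaughton

/-- A normal-form McNaughton function is locally homogeneous in zero iff
some disjunction has all constant terms `≤ 0`. -/
theorem stmt15 (n k : ℕ) (m : Fin (k + 1) → ℕ)
    (a : (i : Fin (k + 1)) → Fin (m i + 1) → Fin n → ℤ)
    (b : (i : Fin (k + 1)) → Fin (m i + 1) → ℤ) :
    LocHomZero n (mcN n k m a b) ↔ ∃ i, ∀ j, b i j ≤ 0 := by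
  constructor
  · rintro ⟨U, -, hU, hhom⟩
    have h0 : (0 : Fin n → ℝ) ∈ U := mem_of_mem_nhdsWithin (fun t => by simp) hU
    have h := hhom 0 0 h0 (by convert h0 using 1; ext; simp)
    simp only [Nat.cast_zero, zero_mul] at h
    exact exists_forall_nonpos_of_mcN_zero h
  · rintro ⟨i, hi⟩
    exact locHomZero_mcN ⟨i, by simpa [nonposRows] using hi⟩
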